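/- If a nonnegative matrix A has positive semidefinite rank d, then there exist matrices N_1, ..., N_{d²}, each of rank at most d, such that A = Σ_{i=1}^{d²} N_i ∘ N_i, where ∘ denotes the entrywise product. -/

import Mathlib

noncomputable def psdRank {m n : ℕ} (A : Matrix (Fin m) (Fin n) ℝ) : ℕ :=
  sInf {r : ℕ | ∃ (E : Fin m → Matrix (Fin r) (Fin r) ℝ) (F : Fin n → Matrix (Fin r) (Fin r) ℝ),
    (∀ i, (E i).PosSemidef) ∧ (∀ j, (F j).PosSemidef) ∧
    ∀ i j, A i j = ((E i) * (F j)).trace}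

/-!
Write the PSD factors as Gram matrices, `E i = (B i)ᵀ * B i` and `F j = (C j)ᵀ * C j`. Then
`A i j = tr ((B i)ᵀ B i (C j)ᵀ C j)` is the squared Frobenius norm of `B i * (C j)ᵀ`, i.e. the sum
of the squares of its `d²` entries. For a fixed entry position `(a, b)` the matrix
`(i, j) ↦ (B i * (C j)ᵀ) a b` is the product of the `m × d` matrix of the `a`-th rows of the `B i`
with the `d × n` matrix of the `b`-th rows of the `C j`, so it has rank at most `d`.
-/

open Matrix

namespace Matrix

open scoped ComplexOrder in
theorem PosSemidef.exists_eq_conjTranspose_mul_self {n 𝕜 : Type*} [Fintype n] [RCLike 𝕜]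
    {A : Matrix n n 𝕜} (hA : A.PosSemidef) : ∃ B : Matrix n n 𝕜, A = Bᴴ * B := by
  classical
  open scoped MatrixOrder in
  exact CStarAlgebra.nonneg_iff_eq_star_mul_self.mp hA.nonneg

theorem trace_transpose_mul_self_mul_transpose_mul_self {k l n R : Type*} [Fintype k] [Fintype l]
    [Fintype n] [CommRing R] (B : Matrix k n R) (C : Matrix l n R) :
    (Bᵀ * B * (Cᵀ * C)).trace = vec (B * Cᵀ) ⬝ᵥ vec (B * Cᵀ) := by
  rw [vec_dotProduct_vec, transpose_mul, transpose_transpose]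
  simp only [Matrix.mul_assoc]
  rw [trace_mul_comm C]
  simp only [Matrix.mul_assoc]

theorem rank_of_mul_apply_le {ι κ p q r R : Type*} [Fintype ι] [Fintype κ] [Fintype q]
    [Field R] (B : ι → Matrix p q R) (C : κ → Matrix q r R) (a : p) (b : r) :
    (of fun i j => (B i * C j) a b).rank ≤ Fintype.card q := by
  have : (of fun i j => (B i * C j) a b) = (of fun i c => B i a c) * of fun c j => C j c b := by
    ext i j; simp [mul_apply]
  rw [this]
  exact (rank_mul_le_left _ _).trans (rank_le_card_width _)

end Matrix

def HasPSDFactorization {m n : ℕ} (A : Matrix (Fin m) (Fin n) ℝ) (r : ℕ) : Prop :=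
  ∃ (E : Fin m → Matrix (Fin r) (Fin r) ℝ) (F : Fin n → Matrix (Fin r) (Fin r) ℝ),
    (∀ i, (E i).PosSemidef) ∧ (∀ j, (F j).PosSemidef) ∧ ∀ i j, A i j = (E i * F j).trace

theorem hasPSDFactorization_of_nonneg {m n : ℕ} {A : Matrix (Fin m) (Fin n) ℝ}
    (hA : ∀ i j, 0 ≤ A i j) : HasPSDFactorization A n := by
  refine ⟨fun i => diagonal (A i), fun j => diagonal (Pi.single j 1),
    fun i => .diagonal (hA i), fun j => .diagonal (Pi.single_nonneg.2 zero_le_one), fun i j => ?_⟩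
  simp [diagonal_mul_diagonal, trace_diagonal, Pi.single_apply]

theorem hasPSDFactorization_psdRank {m n : ℕ} {A : Matrix (Fin m) (Fin n) ℝ}
    (hA : ∀ i j, 0 ≤ A i j) : HasPSDFactorization A (psdRank A) :=
  Nat.sInf_mem (s := {r | HasPSDFactorization A r}) ⟨n, hasPSDFactorization_of_nonneg hA⟩

theorem psdRank_decomposition {m n : ℕ} (A : Matrix (Fin m) (Fin n) ℝ)
    (hA : ∀ i j, 0 ≤ A i j) (d : ℕ) (hd : psdRank A = d) :
    ∃ N : Fin (d ^ 2) → Matrix (Fin m) (Fin n) ℝ,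
      (∀ k, (N k).rank ≤ d) ∧ ∀ i j, A i j = ∑ k, N k i j * N k i j := by
  subst hd
  obtain ⟨E, F, hE, hF, hEF⟩ := hasPSDFactorization_psdRank hA
  choose B hB using fun i => (hE i).exists_eq_conjTranspose_mul_self
  choose C hC using fun j => (hF j).exists_eq_conjTranspose_mul_self
  let e : Fin (psdRank A ^ 2) ≃ Fin (psdRank A) × Fin (psdRank A) :=
    (finCongr (sq _)).trans finProdFinEquiv.symm
  refine ⟨fun k => of fun i j => vec (B i * (C j)ᵀ) (e k), fun k => ?_, fun i j => ?_⟩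
  · simpa using rank_of_mul_apply_le B (fun j => (C j)ᵀ) (e k).2 (e k).1
  · rw [hEF, hB, hC, conjTranspose_eq_transpose_of_trivial, conjTranspose_eq_transpose_of_trivial,
      trace_transpose_mul_self_mul_transpose_mul_self, dotProduct, ← e.sum_comp]
    rfl
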